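/- arXiv:2312.08155 — 8 statements merged into one kernel-verified Lean document; each statement's English description precedes it below -/
import Mathlib

section
/- Let x = (x_n) and y = (y_n) be sequences of real numbers such that the series ∑_n x_n and ∑_n y_n are absolutely convergent. If every point of E(x,y) has a unique representation, then E(x,y) is a Cantor set, i.e. it is nonempty, compact, perfect and totally disconnected. -/
/-- The achievement set of a sequence: the set of all subsums. -/
def achievementSet {E : Type*} [AddCommMonoid E] [TopologicalSpace E] (f : ℕ → E) : Set E :=
  {s | ∃ A : Set ℕ, s = ∑' n : A, f n}

/-!
Encode a set `A ⊆ ℕ` by its indicator `b : ℕ → Bool`. The subsum map `b ↦ ∑_{b n} f n` on the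
Cantor space `ℕ → Bool` is continuous by absolute convergence (Weierstrass M-test), and uniqueness
of representations says exactly that it is injective. A continuous injection from a compact space is
a closed embedding, so the achievement set is homeomorphic to the compact, totally disconnected
space `ℕ → Bool`. It is perfect because flipping the `n`-th bit moves the subsum by `‖f n‖ → 0`,
and by injectivity it does move it.
-/

open Set

namespace AchievementSet

variable {E : Type*} [NormedAddCommGroup E]

lemma summable_norm_prodMk {F : Type*} [NormedAddCommGroup F] {f : ℕ → E} {g : ℕ → F}
    (hf : Summable fun n => ‖f n‖) (hg : Summable fun n => ‖g n‖) :
    Summable fun n => ‖(f n, g n)‖ :=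
  (hf.add hg).of_nonneg_of_le (fun _ => norm_nonneg _) fun _ =>
    max_le_add_of_nonneg (norm_nonneg _) (norm_nonneg _)

noncomputable def subsum (f : ℕ → E) (b : ℕ → Bool) : E :=
  ∑' n, if b n then f n else 0

variable {f : ℕ → E}

lemma norm_ite_le (b : Bool) (v : E) : ‖if b then v else 0‖ ≤ ‖v‖ := by
  cases b <;> simp

lemma subsum_eq_tsum_subtype (b : ℕ → Bool) : subsum f b = ∑' n : {n | b n}, f n := by
  rw [tsum_subtype]
  exact tsum_congr fun n => by cases h : b n <;> simp [h]

lemma range_subsum : range (subsum f) = achievementSet f := by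
  classical
  ext p
  constructor
  · rintro ⟨b, rfl⟩
    exact ⟨_, subsum_eq_tsum_subtype b⟩
  · rintro ⟨A, rfl⟩
    refine ⟨fun n => decide (n ∈ A), ?_⟩
    have hA : {n | decide (n ∈ A) = true} = A := by ext; simp
    rw [subsum_eq_tsum_subtype, hA]

lemma zero_mem_achievementSet : (0 : E) ∈ achievementSet f :=
  ⟨∅, tsum_empty.symm⟩

lemma injective_subsum_of_existsUnique
    (huniq : ∀ p ∈ achievementSet f, ∃! A : Set ℕ, p = ∑' n : A, f n) :
    Function.Injective (subsum f) := by
  intro b b' h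
  obtain ⟨A, -, hA⟩ := huniq _ ⟨_, subsum_eq_tsum_subtype b⟩
  have hsets : {n | b n} = {n | b' n} :=
    (hA _ (subsum_eq_tsum_subtype b)).trans (hA _ (h ▸ subsum_eq_tsum_subtype b')).symm
  funext n
  exact Bool.eq_iff_iff.mpr (Set.ext_iff.mp hsets n)

variable [CompleteSpace E]

lemma continuous_subsum (hf : Summable fun n => ‖f n‖) : Continuous (subsum f) :=
  continuous_tsum
    (fun n => (continuous_of_discreteTopology (f := fun t : Bool => if t then f n else 0)).comp
      (continuous_apply n))
    hf fun n b => norm_ite_le (b n) (f n)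

lemma norm_subsum_update_not_sub (hf : Summable fun n => ‖f n‖) (b : ℕ → Bool) (n : ℕ) :
    ‖subsum f (Function.update b n (!b n)) - subsum f b‖ = ‖f n‖ := by
  have hsummable (c : ℕ → Bool) : Summable fun m => if c m then f m else 0 :=
    .of_norm_bounded hf fun m => norm_ite_le (c m) (f m)
  rw [subsum, subsum, ← (hsummable _).tsum_sub (hsummable b),
    tsum_eq_single n fun m hm => by rw [Function.update_of_ne hm, sub_self]]
  cases b n <;> simp

lemma isCompact_achievementSet (hf : Summable fun n => ‖f n‖) : IsCompact (achievementSet f) :=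
  range_subsum (f := f) ▸ isCompact_range (continuous_subsum hf)

lemma preperfect_achievementSet (hf : Summable fun n => ‖f n‖)
    (hinj : Function.Injective (subsum f)) : Preperfect (achievementSet f) := by
  rw [← range_subsum, preperfect_iff_nhds]
  rintro _ ⟨b, rfl⟩ U hU
  obtain ⟨ε, hε, hball⟩ := Metric.mem_nhds_iff.mp hU
  obtain ⟨n, hn⟩ := (hf.tendsto_atTop_zero.eventually (eventually_lt_nhds hε)).exists
  refine ⟨subsum f (Function.update b n (!b n)), ⟨hball ?_, mem_range_self _⟩, ?_⟩
  · rwa [Metric.mem_ball, dist_eq_norm, norm_subsum_update_not_sub hf]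
  · refine fun h => absurd (congrFun (hinj h) n) ?_
    simp

lemma isTotallyDisconnected_achievementSet (hf : Summable fun n => ‖f n‖)
    (hinj : Function.Injective (subsum f)) : IsTotallyDisconnected (achievementSet f) := by
  rw [← range_subsum, ((continuous_subsum hf).isClosedEmbedding hinj).isEmbedding
    |>.isTotallyDisconnected_range]
  infer_instance

end AchievementSet

open AchievementSet in
theorem stmt_4 (x y : ℕ → ℝ)
    (hx : Summable fun n => |x n|) (hy : Summable fun n => |y n|)
    (huniq : ∀ p ∈ achievementSet (fun n => (x n, y n)),
      ∃! A : Set ℕ, p = ∑' n : A, ((x n, y n) : ℝ × ℝ)) :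
    (achievementSet (fun n => (x n, y n))).Nonempty ∧
    IsCompact (achievementSet (fun n => (x n, y n))) ∧
    Perfect (achievementSet (fun n => (x n, y n))) ∧
    IsTotallyDisconnected (achievementSet (fun n => (x n, y n))) := by
  have hf : Summable fun n => ‖((x n, y n) : ℝ × ℝ)‖ := summable_norm_prodMk hx hy
  have hinj := injective_subsum_of_existsUnique huniq
  have hcompact := isCompact_achievementSet hf
  exact ⟨⟨0, zero_mem_achievementSet⟩, hcompact,
    ⟨hcompact.isClosed, preperfect_achievementSet hf hinj⟩,
    isTotallyDisconnected_achievementSet hf hinj⟩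
end

section
/- Let x = (x_n) and y = (y_n) be sequences of real numbers such that the series ∑_n x_n and ∑_n y_n are absolutely convergent. If every point of E(x) has a unique representation, or every point of E(y) has a unique representation, then E(x,y) is a Cantor set, i.e. it is nonempty, compact, perfect and totally disconnected. -/
/-!
The map `b ↦ ∑_{b n = true} (x n, y n)` from the Cantor space `ℕ → Bool` onto `E(x,y)` is
continuous by absolute convergence, and injective because already one of its coordinates is, by
uniqueness of representations in `E(x)` or `E(y)`. A continuous injection of a compact space into
a Hausdorff space is an embedding, so `E(x,y)` inherits compactness, perfectness and total
disconnectedness from the Cantor space.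
-/

open Set Filter Topology Function

/-- Indexing subsums by `ℕ → Bool` rather than `Set ℕ` equips the choices with the Cantor-space
topology. -/
noncomputable def subsum {E : Type*} [AddCommMonoid E] [TopologicalSpace E] (f : ℕ → E)
    (b : ℕ → Bool) : E :=
  ∑' n, if b n then f n else 0

section AchievementSet

variable {E : Type*} [AddCommMonoid E] [TopologicalSpace E] (f : ℕ → E)

lemma tsum_setOf_eq_subsum (b : ℕ → Bool) : ∑' n : {n | b n = true}, f n = subsum f b := by
  rw [tsum_subtype]
  refine tsum_congr fun n => ?_
  by_cases h : b n = true <;> simp [h]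

lemma achievementSet_eq_range_subsum : achievementSet f = range (subsum f) := by
  classical
  ext s
  constructor
  · rintro ⟨A, rfl⟩
    refine ⟨fun n => decide (n ∈ A), ?_⟩
    have hA : {n | decide (n ∈ A) = true} = A := by ext; simp
    rw [← tsum_setOf_eq_subsum, hA]
  · rintro ⟨b, rfl⟩
    exact ⟨_, (tsum_setOf_eq_subsum f b).symm⟩

variable {f}

lemma subsum_injective (hu : ∀ s ∈ achievementSet f, ∃! A : Set ℕ, s = ∑' n : A, f n) :
    Injective (subsum f) := by
  intro b b' h
  obtain ⟨A, -, hA⟩ := hu (subsum f b) ((achievementSet_eq_range_subsum f).ge ⟨b, rfl⟩)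
  have hsets : {n | b n = true} = {n | b' n = true} :=
    (hA _ (tsum_setOf_eq_subsum f b).symm).trans
      (hA _ (h.trans (tsum_setOf_eq_subsum f b').symm)).symm
  funext n
  exact Bool.eq_iff_iff.mpr (Set.ext_iff.mp hsets n)

end AchievementSet

section Normed

lemma norm_ite_le {E : Type*} [NormedAddCommGroup E] (f : ℕ → E) (b : ℕ → Bool) (n : ℕ) :
    ‖if b n then f n else 0‖ ≤ ‖f n‖ := by
  cases b n <;> simp

variable {E F : Type*} [NormedAddCommGroup E] [CompleteSpace E]
  [NormedAddCommGroup F] [CompleteSpace F] {f : ℕ → E} {g : ℕ → F}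

lemma continuous_subsum (hf : Summable (‖f ·‖)) : Continuous (subsum f) :=
  continuous_tsum (fun n => (continuous_of_discreteTopology (f := fun c : Bool =>
    if c then f n else 0)).comp (continuous_apply n)) hf (fun n b => norm_ite_le f b n)

lemma subsum_prodMk (hf : Summable (‖f ·‖)) (hg : Summable (‖g ·‖)) (b : ℕ → Bool) :
    subsum (fun n => (f n, g n)) b = (subsum f b, subsum g b) := by
  have hsf : HasSum (fun n => if b n then f n else 0) (subsum f b) :=
    (hf.of_norm_bounded (norm_ite_le f b)).hasSum
  have hsg : HasSum (fun n => if b n then g n else 0) (subsum g b) :=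
    (hg.of_norm_bounded (norm_ite_le g b)).hasSum
  refine HasSum.tsum_eq ?_
  convert hsf.prodMk hsg using 1
  funext n
  cases b n <;> rfl

end Normed

instance Pi.perfectSpace {ι X : Type*} [Infinite ι] [TopologicalSpace X] [Nontrivial X] :
    PerfectSpace (ι → X) := by
  classical
  refine ⟨fun b _ => ?_⟩
  choose c hc using fun i => exists_ne (b i)
  -- Changing `b` at a single index that escapes to infinity converges to `b` coordinatewise.
  have hlim : Tendsto (fun i => update b i (c i)) cofinite (𝓝[≠] b) := by
    refine tendsto_nhdsWithin_of_tendsto_nhds_of_eventually_within _ ?_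
      (Eventually.of_forall fun i => ?_)
    · refine tendsto_pi_nhds.mpr fun j => tendsto_const_nhds.congr' ?_
      filter_upwards [(Set.finite_singleton j).eventually_cofinite_notMem] with i hij
      exact (update_of_ne (Ne.symm hij) _ _).symm
    · exact mem_compl_singleton_iff.mpr fun h => hc i (by simpa using congrFun h i)
  simpa [AccPt] using hlim.neBot

lemma preperfect_range_of_injective {X Y : Type*} [TopologicalSpace X] [PerfectSpace X]
    [TopologicalSpace Y] {φ : X → Y} (hφ : Continuous φ) (hinj : Injective φ) :
    Preperfect (range φ) := by
  rintro _ ⟨x, rfl⟩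
  simpa using (PerfectSpace.univ_preperfect x (mem_univ x)).map hφ.continuousAt hinj

theorem stmt_5 (x y : ℕ → ℝ)
    (hx : Summable fun n => |x n|) (hy : Summable fun n => |y n|)
    (huniq : (∀ s ∈ achievementSet x, ∃! A : Set ℕ, s = ∑' n : A, x n) ∨
             (∀ t ∈ achievementSet y, ∃! A : Set ℕ, t = ∑' n : A, y n)) :
    (achievementSet (fun n => (x n, y n))).Nonempty ∧
    IsCompact (achievementSet (fun n => (x n, y n))) ∧
    Perfect (achievementSet (fun n => (x n, y n))) ∧
    IsTotallyDisconnected (achievementSet (fun n => (x n, y n))) := by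
  simp only [← Real.norm_eq_abs] at hx hy
  have hΦ : subsum (fun n => (x n, y n)) = fun b => (subsum x b, subsum y b) :=
    funext (subsum_prodMk hx hy)
  have hcont : Continuous (subsum fun n => (x n, y n)) := by
    rw [hΦ]
    exact (continuous_subsum hx).prodMk (continuous_subsum hy)
  have hinj : Injective (subsum fun n => (x n, y n)) := by
    rw [hΦ]
    rcases huniq with hu | hu
    · exact Injective.of_comp (f := Prod.fst) (subsum_injective hu)
    · exact Injective.of_comp (f := Prod.snd) (subsum_injective hu)
  rw [achievementSet_eq_range_subsum]
  exact ⟨range_nonempty _, isCompact_range hcont,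
    ⟨(isCompact_range hcont).isClosed, preperfect_range_of_injective hcont hinj⟩,
    (hcont.isClosedEmbedding hinj).isEmbedding.isTotallyDisconnected_range.mpr inferInstance⟩
end

section
/- Let x = (x_n) and y = (y_n) be sequences of real numbers such that the series ∑_n x_n and ∑_n y_n are absolutely convergent. If every point of E(x) has a unique representation, then E(x,y) is the graph of a function defined on E(x), i.e. for every s ∈ E(x) there is exactly one t ∈ ℝ with (s,t) ∈ E(x,y). Moreover, if also every point of E(y) has a unique representation, then this function is a bijection from E(x) onto E(y). -/
lemma tsum_pair_eq (x y : ℕ → ℝ)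
    (hx : Summable fun n => |x n|) (hy : Summable fun n => |y n|) (A : Set ℕ) :
    (∑' n : A, (x n, y n)) = (∑' n : A, x n, ∑' n : A, y n) := by
  have hxA : Summable fun n : A => x n := (summable_abs_iff.mp hx).subtype A
  have hyA : Summable fun n : A => y n := (summable_abs_iff.mp hy).subtype A
  exact (hxA.hasSum.prodMk hyA.hasSum).tsum_eq

theorem stmt_7 (x y : ℕ → ℝ)
    (hx : Summable fun n => |x n|) (hy : Summable fun n => |y n|)
    (hux : ∀ s ∈ achievementSet x, ∃! A : Set ℕ, s = ∑' n : A, x n) :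
    (∀ s ∈ achievementSet x, ∃! t : ℝ, (s, t) ∈ achievementSet (fun n => (x n, y n))) ∧
    ((∀ t ∈ achievementSet y, ∃! A : Set ℕ, t = ∑' n : A, y n) →
      ∃ f : ℝ → ℝ,
        (∀ s t : ℝ, (s, t) ∈ achievementSet (fun n => (x n, y n)) ↔
          s ∈ achievementSet x ∧ t = f s) ∧
        Set.BijOn f (achievementSet x) (achievementSet y)) := by
  have hmem : ∀ s t : ℝ, (s, t) ∈ achievementSet (fun n => (x n, y n)) ↔
      ∃ A : Set ℕ, s = ∑' n : A, x n ∧ t = ∑' n : A, y n := by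
    intro s t
    constructor
    · rintro ⟨A, hA⟩
      rw [tsum_pair_eq x y hx hy A, Prod.ext_iff] at hA
      exact ⟨A, hA.1, hA.2⟩
    · rintro ⟨A, h1, h2⟩
      exact ⟨A, by rw [tsum_pair_eq x y hx hy A, Prod.ext_iff]; exact ⟨h1, h2⟩⟩
  -- choice of the unique set for s ∈ E(x)
  classical
  set F : ℝ → ℝ := fun s =>
    if h : s ∈ achievementSet x then ∑' n : ((hux s h).choose : Set ℕ), y n else 0 with hF
  have hFspec : ∀ s (h : s ∈ achievementSet x),
      s = ∑' n : ((hux s h).choose : Set ℕ), x n := fun s h => (hux s h).choose_spec.1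
  have hFuniq : ∀ s (h : s ∈ achievementSet x) (A : Set ℕ),
      s = (∑' n : A, x n) → A = (hux s h).choose := fun s h A hA => (hux s h).choose_spec.2 A hA
  have hFval : ∀ s (h : s ∈ achievementSet x),
      F s = ∑' n : ((hux s h).choose : Set ℕ), y n := by
    intro s h; simp [hF, h]
  have key : ∀ s t : ℝ, (s, t) ∈ achievementSet (fun n => (x n, y n)) ↔
      s ∈ achievementSet x ∧ t = F s := by
    intro s t
    rw [hmem]
    constructor
    · rintro ⟨A, h1, h2⟩
      have hs : s ∈ achievementSet x := ⟨A, h1⟩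
      refine ⟨hs, ?_⟩
      rw [hFval s hs, ← hFuniq s hs A h1]; exact h2
    · rintro ⟨hs, ht⟩
      exact ⟨(hux s hs).choose, hFspec s hs, by rw [ht]; exact hFval s hs⟩
  constructor
  · intro s hs
    refine ⟨F s, (key s (F s)).mpr ⟨hs, rfl⟩, fun t ht => ?_⟩
    exact ((key s t).mp ht).2
  · intro huy
    refine ⟨F, key, ?_, ?_, ?_⟩
    · intro s hs
      exact ⟨(hux s hs).choose, hFval s hs⟩
    · intro s1 h1 s2 h2 he
      rw [hFval s1 h1, hFval s2 h2] at he
      have ht : (∑' n : ((hux s1 h1).choose : Set ℕ), y n) ∈ achievementSet y :=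
        ⟨(hux s1 h1).choose, rfl⟩
      obtain ⟨B, -, hB⟩ := huy _ ht
      have e1 := hB _ rfl
      have e2 := hB _ he
      rw [hFspec s1 h1, hFspec s2 h2, e1, e2]
    · rintro t ⟨A, hA⟩
      have hs : (∑' n : A, x n) ∈ achievementSet x := ⟨A, rfl⟩
      refine ⟨∑' n : A, x n, hs, ?_⟩
      have : ((∑' n : A, x n), t) ∈ achievementSet (fun n => (x n, y n)) :=
        (hmem _ _).mpr ⟨A, rfl, hA⟩
      exact (((key _ t).mp this).2).symm
end

section
/- Let P be a finite set of real numbers with 0 ∈ P, and let a = (a_n) be a sequence of real numbers such that the series ∑_n a_n is absolutely convergent and |a_n| ≥ |a_{n+1}| > 0 for all n ∈ ℕ. Then there exists a sequence ((x_n, y_n)) in ℝ² with ∑_n ‖(x_n,y_n)‖ < ∞ such that the horizontal cut of its achievement set at height 0 equals the set of P-sums of a: E(x_n, y_n)_0 = S(P,a). -/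
/-- The set of `P`-sums of a sequence `a`. -/
def PSums (P : Set ℝ) (a : ℕ → ℝ) : Set ℝ :=
  {s | ∃ ε : ℕ → ℝ, (∀ n, ε n ∈ P) ∧ s = ∑' n, ε n * a n}

theorem hasSum_prodMk_iff {ι α β : Type*} [AddCommMonoid α] [TopologicalSpace α]
    [AddCommMonoid β] [TopologicalSpace β] {f : ι → α} {g : ι → β} {a : α} {b : β} :
    HasSum (fun i => (f i, g i)) (a, b) ↔ HasSum f a ∧ HasSum g b :=
  ⟨fun h => ⟨h.map (AddMonoidHom.fst α β) continuous_fst,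
    h.map (AddMonoidHom.snd α β) continuous_snd⟩, fun h => h.1.prodMk h.2⟩

section Digits

variable {r K : ℝ} {c : ℕ → ℤ}

theorem head_eq_zero_of_hasSum_int_mul_pow (hr : 0 < r) (hKr : (K + 1) * r < 1)
    (hc : ∀ n, |(c n : ℝ)| ≤ K) (h : HasSum (fun n => (c n : ℝ) * r ^ n) 0) : c 0 = 0 := by
  have hr1 : r < 1 := by nlinarith [(abs_nonneg _).trans (hc 0)]
  have htail : HasSum (fun n => (c (n + 1) : ℝ) * r ^ (n + 1)) (-c 0) := by
    simpa using (hasSum_nat_add_iff' 1).2 h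
  have hgeom : HasSum (fun n => K * r ^ (n + 1)) (K * r * (1 - r)⁻¹) := by
    simpa [pow_succ, mul_assoc, mul_comm r, mul_left_comm K] using
      (hasSum_geometric_of_lt_one hr.le hr1).mul_left (K * r)
  have hbound : |(c 0 : ℝ)| ≤ K * r * (1 - r)⁻¹ := by
    simpa using htail.norm_le_of_bounded hgeom fun n => by
      rw [Real.norm_eq_abs, abs_mul, abs_of_pos (pow_pos hr _)]
      exact mul_le_mul_of_nonneg_right (hc _) (pow_pos hr _).le
  have hlt : K * r * (1 - r)⁻¹ < 1 := by
    rw [← div_eq_mul_inv, div_lt_one (by linarith)]; linarith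
  exact Int.abs_lt_one_iff.1 (by exact_mod_cast hbound.trans_lt hlt)

theorem eq_zero_of_hasSum_int_mul_pow (hr : 0 < r) (hKr : (K + 1) * r < 1)
    (hc : ∀ n, |(c n : ℝ)| ≤ K) (h : HasSum (fun n => (c n : ℝ) * r ^ n) 0) (n : ℕ) :
    c n = 0 := by
  induction n generalizing c with
  | zero => exact head_eq_zero_of_hasSum_int_mul_pow hr hKr hc h
  | succ n ih =>
    refine ih (c := fun m => c (m + 1)) (fun m => hc _) ?_
    -- `c 0 = 0`, so the tail `∑ cₘ₊₁ rᵐ⁺¹` vanishes too; divide it by `r`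
    have htail := (hasSum_nat_add_iff' 1).2 h
    simp only [Finset.sum_range_one, head_eq_zero_of_hasSum_int_mul_pow hr hKr hc h,
      Int.cast_zero, zero_mul, sub_zero, pow_succ, ← mul_assoc] at htail
    simpa [hr.ne'] using htail.div_const r

end Digits

theorem achievementSet_comp_symm {ι E : Type*} [AddCommMonoid E] [TopologicalSpace E]
    (e : ι ≃ ℕ) (g : ι → E) :
    achievementSet (g ∘ e.symm) = {s | ∃ B : Set ι, s = ∑' q : B, g q} := by
  ext s
  constructor
  · rintro ⟨A, rfl⟩
    exact ⟨e.symm '' A, (tsum_image g e.symm.injective.injOn).symm⟩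
  · rintro ⟨B, rfl⟩
    refine ⟨e.symm ⁻¹' B, ?_⟩
    have := tsum_image g (s := e.symm ⁻¹' B) e.symm.injective.injOn
    rwa [e.symm.image_preimage] at this

section Fiberwise

variable {α β E : Type*} [AddCommGroup E] [UniformSpace E] [IsUniformAddGroup E] [CompleteSpace E]
  {g : α × β → E}

theorem hasSum_sum_fiber (hg : Summable g) (S : α → Finset β) :
    HasSum (fun n => ∑ j ∈ S n, g (n, j)) (∑' q : {q : α × β | q.2 ∈ S q.1}, g q) := by
  have hfiber : ∀ n, HasSum (fun j => {q : α × β | q.2 ∈ S q.1}.indicator g (n, j))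
      (∑ j ∈ S n, g (n, j)) := fun n =>
    hasSum_subtype_iff_indicator.1 ((S n).hasSum fun j => g (n, j))
  rw [tsum_subtype]
  exact (hg.indicator _).hasSum.prod_fiberwise hfiber

theorem achievementSet_comp_symm_prod [T0Space E] [Fintype β] (hg : Summable g)
    (e : α × β ≃ ℕ) :
    achievementSet (g ∘ e.symm) =
      {s | ∃ S : α → Finset β, HasSum (fun n => ∑ j ∈ S n, g (n, j)) s} := by
  classical
  rw [achievementSet_comp_symm]
  ext s
  constructor
  · rintro ⟨B, rfl⟩
    have hB : {q : α × β | q.2 ∈ ({j | (q.1, j) ∈ B} : Finset β)} = B := by ext; simp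
    have := hasSum_sum_fiber hg fun n => {j | (n, j) ∈ B}
    rw [hB] at this
    exact ⟨_, this⟩
  · rintro ⟨S, hS⟩
    exact ⟨_, hS.unique (hasSum_sum_fiber hg S)⟩

end Fiberwise

namespace PSumCut

variable {P : Set ℝ}

-- Block `n` consists of `(p aₙ, rⁿ)`, indexed by `some p`, and `(0, -rⁿ)`, indexed by `none`.
def label : Option P → ℝ := fun j => j.elim 0 (↑)

def sign : Option P → ℤ := fun j => j.elim (-1) fun _ => 1

def generator (P : Set ℝ) (a : ℕ → ℝ) (r : ℝ) (q : ℕ × Option P) : ℝ × ℝ :=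
  (label q.2 * a q.1, sign q.2 * r ^ q.1)

theorem abs_sign (j : Option P) : |(sign j : ℝ)| = 1 := by
  cases j <;> simp [sign]

theorem sum_sign_eq_card {T : Finset (Option P)} (hT : none ∉ T) : ∑ j ∈ T, sign j = T.card := by
  rw [Finset.card_eq_sum_ones, Nat.cast_sum]
  refine Finset.sum_congr rfl fun j hj => ?_
  cases j
  · exact absurd hj hT
  · rfl

theorem label_sum_mem (hP0 : (0 : ℝ) ∈ P) {S : Finset (Option P)}
    (h : ∑ j ∈ S, sign j = 0) : ∑ j ∈ S, label j ∈ P := by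
  by_cases hS : none ∈ S
  · rw [← Finset.insert_erase hS, Finset.sum_insert (Finset.notMem_erase _ _)] at h ⊢
    have hcard : (S.erase none).card = 1 := by
      have := sum_sign_eq_card (Finset.notMem_erase none S)
      rw [show sign (none : Option P) = -1 from rfl] at h
      omega
    obtain ⟨j, hj⟩ := Finset.card_eq_one.1 hcard
    have hjS : j ∈ S.erase none := hj ▸ Finset.mem_singleton_self j
    obtain ⟨p, rfl⟩ := Option.ne_none_iff_exists'.1 (Finset.ne_of_mem_erase hjS)
    simp [hj, label]
  · have := sum_sign_eq_card hS
    rw [Finset.card_eq_zero.1 (by omega : S.card = 0)]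
    simpa using hP0

theorem exists_sign_sum_eq_zero_label_sum_eq {x : ℝ} (hx : x ∈ P) :
    ∃ S : Finset (Option P), ∑ j ∈ S, sign j = 0 ∧ ∑ j ∈ S, label j = x :=
  ⟨{none, some ⟨x, hx⟩}, by simp [sign, label]⟩

theorem abs_sign_sum_le [Fintype P] (S : Finset (Option P)) :
    |((∑ j ∈ S, sign j : ℤ) : ℝ)| ≤ Fintype.card (Option P) := by
  push_cast
  calc |∑ j ∈ S, (sign j : ℝ)| ≤ ∑ j ∈ S, |(sign j : ℝ)| := Finset.abs_sum_le_sum_abs _ _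
    _ = S.card := by simp [abs_sign]
    _ ≤ Fintype.card (Option P) := by exact_mod_cast S.card_le_univ

variable {a : ℕ → ℝ} {r : ℝ}

theorem sum_generator (S : Finset (Option P)) (n : ℕ) :
    ∑ j ∈ S, generator P a r (n, j) =
      ((∑ j ∈ S, label j) * a n, ((∑ j ∈ S, sign j : ℤ) : ℝ) * r ^ n) := by
  ext <;> simp [generator, Finset.sum_mul, Prod.fst_sum, Prod.snd_sum]

theorem summable_norm_generator [Finite P] (ha : Summable fun n => |a n|) (hr0 : 0 ≤ r)
    (hr1 : r < 1) : Summable fun q => ‖generator P a r q‖ := by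
  have hbound : Summable fun q : ℕ × Option P => |a q.1| * |label q.2| + r ^ q.1 * 1 :=
    (ha.mul_of_nonneg Summable.of_finite (fun _ => abs_nonneg _) fun _ => abs_nonneg _).add
      ((summable_geometric_of_lt_one hr0 hr1).mul_of_nonneg Summable.of_finite
        (fun _ => pow_nonneg hr0 _) fun _ => zero_le_one)
  refine hbound.of_nonneg_of_le (fun _ => norm_nonneg _) fun q => ?_
  rw [Prod.norm_def]
  refine (max_le_add_of_nonneg (norm_nonneg _) (norm_nonneg _)).trans_eq ?_
  simp [generator, abs_sign, abs_of_nonneg hr0, mul_comm]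

end PSumCut

open PSumCut in
theorem stmt_8_general (P : Set ℝ) (hPfin : P.Finite) (hP0 : (0 : ℝ) ∈ P)
    (a : ℕ → ℝ) (ha : Summable fun n => |a n|) :
    ∃ f : ℕ → ℝ × ℝ, (Summable fun n => ‖f n‖) ∧
      {w : ℝ | (w, (0 : ℝ)) ∈ achievementSet f} = PSums P a := by
  have := hPfin.fintype
  set r : ℝ := ((Fintype.card (Option P) : ℝ) + 2)⁻¹
  have hr0 : 0 < r := by positivity
  have hKr : ((Fintype.card (Option P) : ℝ) + 1) * r < 1 := by
    rw [← div_eq_mul_inv, div_lt_one (by positivity)]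
    linarith
  have hg := summable_norm_generator (P := P) ha hr0.le (by nlinarith)
  obtain ⟨e⟩ : Nonempty (ℕ × Option P ≃ ℕ) := inferInstance
  refine ⟨generator P a r ∘ e.symm, e.symm.summable_iff.2 hg, ?_⟩
  ext w
  simp only [Set.mem_ofPred_eq, achievementSet_comp_symm_prod hg.of_norm e, sum_generator, PSums]
  constructor
  · rintro ⟨S, hS⟩
    obtain ⟨hw, h0⟩ := hasSum_prodMk_iff.1 hS
    have hsign := eq_zero_of_hasSum_int_mul_pow hr0 hKr (fun n => abs_sign_sum_le (S n)) h0
    exact ⟨_, fun n => label_sum_mem hP0 (hsign n), hw.tsum_eq.symm⟩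
  · rintro ⟨ε, hε, rfl⟩
    choose S hsign hlabel using fun n => exists_sign_sum_eq_zero_label_sum_eq (hε n)
    have hsum := (hasSum_sum_fiber hg.of_norm S).summable
    simp only [sum_generator, hsign, hlabel, Int.cast_zero, zero_mul] at hsum
    have hεa : Summable fun n => ε n * a n := by
      simpa [Function.comp_def] using hsum.map (AddMonoidHom.fst ℝ ℝ) continuous_fst
    refine ⟨S, ?_⟩
    simp only [hsign, hlabel, Int.cast_zero, zero_mul]
    exact hasSum_prodMk_iff.2 ⟨hεa.hasSum, hasSum_zero⟩

theorem stmt_8 (P : Set ℝ) (hPfin : P.Finite) (hP0 : (0 : ℝ) ∈ P)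
    (a : ℕ → ℝ) (ha : Summable fun n => |a n|)
    (hmono : ∀ n, |a (n + 1)| ≤ |a n|) (hpos : ∀ n, 0 < |a n|) :
    ∃ f : ℕ → ℝ × ℝ, (Summable fun n => ‖f n‖) ∧
      {w : ℝ | (w, (0 : ℝ)) ∈ achievementSet f} = PSums P a :=
  stmt_8_general P hPfin hP0 a ha
end

section
/- The spectre of the unit square [0,1]² ⊆ ℝ² equals ({0} × [−1/2, 1/2]) ∪ ([−1/2, 1/2] × {0}). -/
/-- The spectre of a set in an Abelian group. -/
def spectre {X : Type*} [AddCommGroup X] (A : Set X) : Set X :=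
  {x | ∀ y ∈ A, y + x ∈ A ∨ y - x ∈ A}

theorem stmt_12 :
    spectre (Set.Icc (0 : ℝ) 1 ×ˢ Set.Icc (0 : ℝ) 1) =
      ({0} ×ˢ Set.Icc (-(1 / 2) : ℝ) (1 / 2)) ∪
      (Set.Icc (-(1 / 2) : ℝ) (1 / 2) ×ˢ {0}) := by
  ext ⟨a, b⟩
  simp only [spectre, Set.mem_setOf_eq, Set.mem_prod, Set.mem_Icc, Set.mem_union,
    Set.mem_singleton_iff, Prod.forall, Prod.mk_add_mk, Prod.mk_sub_mk]
  constructor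
  · intro h
    have h0 := h 0 0 (by norm_num)
    have h1 := h 1 0 (by norm_num)
    have h2 := h 0 1 (by norm_num)
    have hh := h (1/2) (1/2) (by norm_num)
    simp only [zero_add, zero_sub, add_zero, sub_zero] at h0 h1 h2 hh
    have hab : (-(1/2) ≤ a ∧ a ≤ 1/2) ∧ (-(1/2) ≤ b ∧ b ≤ 1/2) := by
      rcases hh with ⟨⟨h1, h2⟩, h3, h4⟩ | ⟨⟨h1, h2⟩, h3, h4⟩ <;>
        exact ⟨⟨by linarith, by linarith⟩, by linarith, by linarith⟩
    have key : a = 0 ∨ b = 0 := by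
      rcases h0 with ⟨⟨ha0, _⟩, hb0, _⟩ | ⟨⟨_, ha0⟩, _, hb0⟩
      · rcases h1 with ⟨⟨_, ha1⟩, _⟩ | ⟨_, hb1, _⟩
        · exact Or.inl (le_antisymm (by linarith) ha0)
        · exact Or.inr (le_antisymm (by linarith) hb0)
      · rcases h2 with ⟨⟨ha1, _⟩, _⟩ | ⟨_, _, hb1⟩
        · exact Or.inl (le_antisymm (by linarith) ha1)
        · exact Or.inr (le_antisymm (by linarith) (by linarith))
    rcases key with ha | hb
    · exact Or.inl ⟨ha, hab.2⟩
    · exact Or.inr ⟨hab.1, hb⟩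
  · rintro (⟨ha, hb1, hb2⟩ | ⟨⟨ha1, ha2⟩, hb⟩) <;> intro y1 y2 ⟨⟨hy1, hy1'⟩, hy2, hy2'⟩
    · subst ha
      by_cases hc : y2 + b ≤ 1
      · by_cases hc' : 0 ≤ y2 + b
        · exact Or.inl ⟨⟨by linarith, by linarith⟩, hc', hc⟩
        · exact Or.inr ⟨⟨by linarith, by linarith⟩, by linarith, by linarith⟩
      · exact Or.inr ⟨⟨by linarith, by linarith⟩, by linarith, by linarith⟩
    · subst hb
      by_cases hc : y1 + a ≤ 1
      · by_cases hc' : 0 ≤ y1 + a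
        · exact Or.inl ⟨⟨hc', hc⟩, by linarith, by linarith⟩
        · exact Or.inr ⟨⟨by linarith, by linarith⟩, by linarith, by linarith⟩
      · exact Or.inr ⟨⟨by linarith, by linarith⟩, by linarith, by linarith⟩
end

section
/- Let (X,+) be an Abelian topological group that is Hausdorff. If A ⊆ X is nonempty and compact, then its spectre S(A) is compact. -/
theorem spectre_subset_image_sub_union_image_sub {X : Type*} [AddCommGroup X] {A : Set X} {a : X}
    (ha : a ∈ A) : spectre A ⊆ (· - a) '' A ∪ (a - ·) '' A := by
  intro x hx
  rcases hx a ha with h | h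
  · exact Or.inl ⟨a + x, h, add_sub_cancel_left a x⟩
  · exact Or.inr ⟨a - x, h, sub_sub_cancel a x⟩

theorem isClosed_spectre {X : Type*} [AddCommGroup X] [TopologicalSpace X]
    [IsTopologicalAddGroup X] {A : Set X} (hA : IsClosed A) : IsClosed (spectre A) := by
  have : spectre A = ⋂ y ∈ A, ((y + ·) ⁻¹' A ∪ (y - ·) ⁻¹' A) := by
    ext x
    simp [spectre]
  rw [this]
  exact isClosed_biInter fun y _ =>
    (hA.preimage (continuous_const_add y)).union (hA.preimage (continuous_sub_left y))

theorem stmt_15 {X : Type*} [AddCommGroup X] [TopologicalSpace X]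
    [IsTopologicalAddGroup X] [T2Space X]
    (A : Set X) (hne : A.Nonempty) (hA : IsCompact A) :
    IsCompact (spectre A) := by
  obtain ⟨a, ha⟩ := hne
  have hbound : IsCompact ((· - a) '' A ∪ (a - ·) '' A) :=
    (hA.image (continuous_sub_right a)).union (hA.image (continuous_sub_left a))
  exact hbound.of_isClosed_subset (isClosed_spectre hA.isClosed)
    (spectre_subset_image_sub_union_image_sub ha)
end

section
/- Let (X,+) be an Abelian group and let (B_i)_{i∈ℕ} be a decreasing sequence (B_{i+1} ⊆ B_i for all i) of nonempty subsets of X. Then ⋂_{i∈ℕ} S(B_i) ⊆ S(⋂_{i∈ℕ} B_i). -/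
theorem stmt_17 {X : Type*} [AddCommGroup X] (B : ℕ → Set X)
    (hdec : ∀ i, B (i + 1) ⊆ B i) (hne : ∀ i, (B i).Nonempty) :
    ⋂ i, spectre (B i) ⊆ spectre (⋂ i, B i) := by
  have hmono : ∀ i j, i ≤ j → B j ⊆ B i := by
    intro i j hij
    induction j with
    | zero => simp_all
    | succ k ih =>
      rcases Nat.lt_or_ge i (k+1) with h | h
      · exact (hdec k).trans (ih (Nat.lt_succ_iff.mp h))
      · have : i = k + 1 := le_antisymm hij h
        subst this; exact subset_rfl
  intro x hx y hy
  simp only [Set.mem_iInter] at hy ⊢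
  have hx' : ∀ i, x ∈ spectre (B i) := Set.mem_iInter.mp hx
  by_cases h : ∀ i, y + x ∈ B i
  · exact Or.inl h
  · push_neg at h
    obtain ⟨i0, hi0⟩ := h
    refine Or.inr fun i => ?_
    rcases hx' (max i i0) y (hy _) with hc | hc
    · exact absurd (hmono i0 _ (le_max_right _ _) hc) hi0
    · exact hmono i _ (le_max_left _ _) hc
end

section
/- Let (x_n) and (y_n) be sequences of real numbers such that the series ∑_n (x_n, y_n) in ℝ² is absolutely convergent. If (x,y) ∈ S(E(x_n, y_n)), then x ∈ S(E(x_n)) and y ∈ S(E(y_n)). -/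
theorem stmt_19 (x y : ℕ → ℝ)
    (h : Summable fun n => ‖((x n, y n) : ℝ × ℝ)‖)
    (a b : ℝ) (hab : (a, b) ∈ spectre (achievementSet (fun n => (x n, y n)))) :
    a ∈ spectre (achievementSet x) ∧ b ∈ spectre (achievementSet y) := by
  have hx : Summable x := by
    apply Summable.of_norm
    refine h.of_nonneg_of_le (fun n => norm_nonneg _) (fun n => ?_)
    exact (norm_fst_le ((x n, y n) : ℝ × ℝ))
  have hy : Summable y := by
    apply Summable.of_norm
    refine h.of_nonneg_of_le (fun n => norm_nonneg _) (fun n => ?_)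
    exact (norm_snd_le ((x n, y n) : ℝ × ℝ))
  have key : ∀ A : Set ℕ, (∑' n : A, ((x n, y n) : ℝ × ℝ)) =
      (∑' n : A, x n, ∑' n : A, y n) := by
    intro A
    exact (((hx.subtype A).hasSum.prodMk (hy.subtype A).hasSum)).tsum_eq
  constructor
  · rintro s ⟨A, rfl⟩
    rcases hab (∑' n : A, x n, ∑' n : A, y n) ⟨A, (key A).symm⟩ with hc | hc
    · rcases hc with ⟨B, hB⟩
      rw [key B, Prod.mk_add_mk, Prod.mk.injEq] at hB
      exact Or.inl ⟨B, hB.1⟩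
    · rcases hc with ⟨B, hB⟩
      rw [key B, Prod.mk_sub_mk, Prod.mk.injEq] at hB
      exact Or.inr ⟨B, hB.1⟩
  · rintro s ⟨A, rfl⟩
    rcases hab (∑' n : A, x n, ∑' n : A, y n) ⟨A, (key A).symm⟩ with hc | hc
    · rcases hc with ⟨B, hB⟩
      rw [key B, Prod.mk_add_mk, Prod.mk.injEq] at hB
      exact Or.inl ⟨B, hB.2⟩
    · rcases hc with ⟨B, hB⟩
      rw [key B, Prod.mk_sub_mk, Prod.mk.injEq] at hB
      exact Or.inr ⟨B, hB.2⟩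
end
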